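/- arXiv:1801.07412 — 3 statements merged into one kernel-verified Lean document; each statement's English description precedes it below -/
import Mathlib

section
/- Let n ≥ 2 and 1 ≤ m ≤ n−1 be integers, let i ∈ V = {1,…,n} and let N ⊆ V \ {i} with |N| = m, and let L = L_{i,N} be the star Laplacian. Then for every real T ≥ 0 the entries of the matrix exponential exp(−T L) are: (exp(−TL))_{ii} = (1 + m e^{−(m+1)T})/(m+1); (exp(−TL))_{ij} = (exp(−TL))_{ji} = (1 − e^{−(m+1)T})/(m+1) for every j ∈ N; (exp(−TL))_{jj} = e^{−T} + (m + e^{−(m+1)T} − (m+1)e^{−T})/(m(m+1)) for every j ∈ N; (exp(−TL))_{jj'} = (m + e^{−(m+1)T} − (m+1)e^{−T})/(m(m+1)) for all distinct j, j' ∈ N; (exp(−TL))_{kk} = 1 for every k ∉ {i} ∪ N; and all remaining entries are zero. -/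
/-!
With `m = #N`, `w = 𝟙_N` and `v = m • eᵢ - w`, the star Laplacian splits as `L = P₁ + (m + 1) • P₂`,
where `P₁ = diag w - m⁻¹ • w wᵀ` and `P₂ = (m (m + 1))⁻¹ • v vᵀ` are orthogonal idempotents: the
spectral projections of `L` for the eigenvalues `1` and `m + 1`, while `1 - P₁ - P₂` projects onto
its kernel. For orthogonal idempotents the exponential series collapses termwise,
`exp (a • P₁ + b • P₂) = eᵃ • P₁ + eᵇ • P₂ + (1 - P₁ - P₂)`, so
`exp (-T • L) = e^(-T) • P₁ + e^(-(m+1)T) • P₂ + (1 - P₁ - P₂)` and every entry is explicit.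
-/

open Matrix MeasureTheory ProbabilityTheory

/-- Measurable space structure on matrices (entrywise/pi structure). -/
instance matMS (n : ℕ) : MeasurableSpace (Matrix (Fin n) (Fin n) ℝ) := MeasurableSpace.pi

/-- The discrete measurable space structure on finite sets of nodes. -/
instance finsetMS (n : ℕ) : MeasurableSpace (Finset (Fin n)) := ⊤

/-- The star Laplacian `L_{i,N}`: the Laplacian of the graph on `Fin n` whose edge set is
`{{i,j} : j ∈ N}`, where `m = |N|`.  Its entries are `(L)_{ii} = m`, `(L)_{jj} = 1` and
`(L)_{ij} = (L)_{ji} = -1` for `j ∈ N`, and `0` otherwise. -/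
noncomputable def starLap (n m : ℕ) (i : Fin n) (N : Finset (Fin n)) :
    Matrix (Fin n) (Fin n) ℝ :=
  Matrix.of fun k l =>
    if k = i ∧ l = i then (m : ℝ)
    else if k = i ∧ l ∈ N then -1
    else if l = i ∧ k ∈ N then -1
    else if k = l ∧ k ∈ N then 1
    else 0

/-- The matrix `M_i(T)`. -/
noncomputable def Mmat (n m : ℕ) (i : Fin n) (T : ℝ) : Matrix (Fin n) (Fin n) ℝ :=
  Matrix.of fun k l =>
    if k = i ∧ l = i then (1 + m * Real.exp (-((m : ℝ) + 1) * T)) / ((m : ℝ) + 1)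
    else if k = l then
      1 + (((m : ℝ) ^ 2 - 1) * Real.exp (-T) + Real.exp (-((m : ℝ) + 1) * T) - (m : ℝ) ^ 2) /
        (((m : ℝ) + 1) * ((n : ℝ) - 1))
    else if k = i ∨ l = i then
      (m : ℝ) * (1 - Real.exp (-((m : ℝ) + 1) * T)) / (((m : ℝ) + 1) * ((n : ℝ) - 1))
    else
      ((m : ℝ) - 1) * ((m : ℝ) + Real.exp (-((m : ℝ) + 1) * T) - ((m : ℝ) + 1) * Real.exp (-T)) /
        (((m : ℝ) + 1) * ((n : ℝ) - 1) * ((n : ℝ) - 2))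

/-- A graph Laplacian on `n` nodes: a real symmetric matrix with nonpositive off-diagonal
entries and all row sums equal to zero. -/
def IsGraphLaplacian {n : ℕ} (L : Matrix (Fin n) (Fin n) ℝ) : Prop :=
  L.IsSymm ∧ (∀ k l, k ≠ l → L k l ≤ 0) ∧ (∀ k, ∑ l, L k l = 0)

/-- The eigenvalues of a real symmetric matrix sorted in nondecreasing order (`0`-indexed):
`sortedEig A (k-1)` is `λ_k(A)` in the notation `λ_1(A) ≤ ⋯ ≤ λ_n(A)`. -/
noncomputable def sortedEig {n : ℕ} (A : Matrix (Fin n) (Fin n) ℝ) (k : ℕ) : ℝ :=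
  if hA : A.IsHermitian then ((Finset.univ.val.map hA.eigenvalues).sort (· ≤ ·)).getD k 0
  else 0

/-- The orthogonal projection `Π = I - (1/n) J` of `ℝⁿ` onto the hyperplane orthogonal to
the all-ones vector. -/
noncomputable def projMat (n : ℕ) : Matrix (Fin n) (Fin n) ℝ :=
  1 - (n : ℝ)⁻¹ • Matrix.of (fun _ _ => (1 : ℝ))

/-- The Euclidean norm of a vector in `ℝⁿ`. -/
noncomputable def eucNorm {n : ℕ} (x : Fin n → ℝ) : ℝ :=
  ‖(WithLp.equiv 2 (Fin n → ℝ)).symm x‖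

/-- The operator norm of an `n × n` real matrix induced by the Euclidean norm. -/
noncomputable def opNorm {n : ℕ} (A : Matrix (Fin n) (Fin n) ℝ) : ℝ :=
  ‖Matrix.toEuclideanCLM (𝕜 := ℝ) A‖

/-- `0 ^ k` is `1` for `k = 0` and `0` otherwise, so the last summand is the constant term. -/
theorem pow_smul_add_smul_of_mul_eq_zero {R A : Type*} [CommSemiring R] [Ring A] [Algebra R A]
    {P Q : A} (hP : IsIdempotentElem P) (hQ : IsIdempotentElem Q) (hPQ : P * Q = 0)
    (hQP : Q * P = 0) (a b : R) (k : ℕ) :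
    (a • P + b • Q) ^ k = a ^ k • P + b ^ k • Q + (0 : R) ^ k • (1 - P - Q) := by
  induction k with
  | zero => simp
  | succ k ih =>
    rw [pow_succ, ih]
    simp only [add_mul, sub_mul, mul_add, smul_mul_smul_comm, hP.eq, hQ.eq, hPQ, hQP, one_mul,
      sub_self, sub_zero, smul_zero, zero_add, add_zero, pow_succ, mul_zero, zero_smul]

theorem NormedSpace.exp_smul_add_smul_of_mul_eq_zero {𝔸 : Type*} [NormedRing 𝔸]
    [NormedAlgebra ℝ 𝔸] [CompleteSpace 𝔸] {P Q : 𝔸} (hP : IsIdempotentElem P)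
    (hQ : IsIdempotentElem Q) (hPQ : P * Q = 0) (hQP : Q * P = 0) (a b : ℝ) :
    NormedSpace.exp (a • P + b • Q) = Real.exp a • P + Real.exp b • Q + (1 - P - Q) := by
  have hexp (x : ℝ) : HasSum (fun k => (k.factorial⁻¹ : ℝ) • x ^ k) (Real.exp x) :=
    Real.exp_eq_exp_ℝ ▸ NormedSpace.exp_series_hasSum_exp' x
  refine (NormedSpace.exp_series_hasSum_exp' (𝕂 := ℝ) _).unique ?_
  simp only [pow_smul_add_smul_of_mul_eq_zero hP hQ hPQ hQP, smul_add, smul_smul]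
  simpa using ((hexp a).smul_const P).add ((hexp b).smul_const Q) |>.add
    ((hexp 0).smul_const (1 - P - Q))

theorem Matrix.exp_smul_add_smul_of_mul_eq_zero {ι : Type*} [Fintype ι] [DecidableEq ι]
    {P Q : Matrix ι ι ℝ} (hP : IsIdempotentElem P) (hQ : IsIdempotentElem Q) (hPQ : P * Q = 0) (hQP : Q * P = 0) (a b : ℝ) :
    NormedSpace.exp (a • P + b • Q) = Real.exp a • P + Real.exp b • Q + (1 - P - Q) :=
  open scoped Norms.Operator in NormedSpace.exp_smul_add_smul_of_mul_eq_zero hP hQ hPQ hQP a b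

theorem Matrix.diagonal_mul_vecMulVec {ι R : Type*} [Fintype ι] [DecidableEq ι]
    [NonUnitalSemiring R] (d x y : ι → R) : diagonal d * vecMulVec x y = vecMulVec (d * x) y := by
  rw [mul_vecMulVec]
  exact congrArg (vecMulVec · y) (funext (mulVec_diagonal d x))

theorem Matrix.vecMulVec_mul_diagonal {ι R : Type*} [Fintype ι] [DecidableEq ι]
    [NonUnitalSemiring R] (x y d : ι → R) : vecMulVec x y * diagonal d = vecMulVec x (y * d) := by
  rw [vecMulVec_mul]
  exact congrArg (vecMulVec x) (funext (vecMul_diagonal y d))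

theorem Matrix.vecMulVec_mul_vecMulVec_eq_smul {ι R : Type*} [Fintype ι] [CommSemiring R]
    (u v w x : ι → R) : vecMulVec u v * vecMulVec w x = (v ⬝ᵥ w) • vecMulVec u x := by
  rw [vecMulVec_mul_vecMulVec, vecMulVec_smul]

namespace StarGraph

variable {ι : Type*} [DecidableEq ι] (i : ι) (N : Finset ι)

open Finset

def leafInd : ι → ℝ := fun k => if k ∈ N then 1 else 0

def centerVec : ι → ℝ := (#N : ℝ) • Pi.single i 1 - leafInd N

variable [Fintype ι] in
noncomputable def leafProj : Matrix ι ι ℝ :=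
  diagonal (leafInd N) - (#N : ℝ)⁻¹ • vecMulVec (leafInd N) (leafInd N)

variable [Fintype ι] in
noncomputable def centerProj : Matrix ι ι ℝ :=
  ((#N : ℝ) * (#N + 1))⁻¹ • vecMulVec (centerVec i N) (centerVec i N)

variable {i N}

theorem leafInd_mul_leafInd : leafInd N * leafInd N = leafInd N := by
  ext k; by_cases hk : k ∈ N <;> simp [leafInd, hk]

theorem leafInd_apply_of_notMem (hi : i ∉ N) : leafInd N i = 0 := by simp [leafInd, hi]

theorem leafInd_mul_centerVec (hi : i ∉ N) : leafInd N * centerVec i N = -leafInd N := by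
  ext k
  by_cases hk : k ∈ N
  · simp [leafInd, centerVec, hk, ne_of_mem_of_not_mem hk hi]
  · simp [leafInd, hk]

variable [Fintype ι]

theorem leafInd_dotProduct_leafInd : leafInd N ⬝ᵥ leafInd N = #N := by
  simp [dotProduct, leafInd]

theorem leafInd_dotProduct_centerVec (hi : i ∉ N) : leafInd N ⬝ᵥ centerVec i N = -#N := by
  simp [centerVec, dotProduct_sub, leafInd_dotProduct_leafInd, leafInd_apply_of_notMem hi]

theorem centerVec_dotProduct_centerVec (hi : i ∉ N) :
    centerVec i N ⬝ᵥ centerVec i N = #N * (#N + 1) := by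
  rw [centerVec, sub_dotProduct, ← centerVec, dotProduct_comm, leafInd_dotProduct_centerVec hi]
  simp [centerVec, leafInd_apply_of_notMem hi]
  ring

theorem isIdempotentElem_leafProj : IsIdempotentElem (leafProj N) := by
  have hc : (#N : ℝ)⁻¹ * (#N : ℝ)⁻¹ * #N = (#N : ℝ)⁻¹ := by
    simpa using mul_self_mul_inv (#N : ℝ)⁻¹
  simp only [IsIdempotentElem, leafProj, sub_mul, mul_sub, diagonal_mul_diagonal', ← Pi.mul_def,
    diagonal_mul_vecMulVec, vecMulVec_mul_diagonal, smul_mul_assoc, mul_smul_comm,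
    vecMulVec_mul_vecMulVec_eq_smul, leafInd_mul_leafInd, leafInd_dotProduct_leafInd]
  match_scalars
  · rfl
  · linear_combination hc

theorem isIdempotentElem_centerProj (hi : i ∉ N) : IsIdempotentElem (centerProj i N) := by
  have hc (c : ℝ) : c⁻¹ * c⁻¹ * c = c⁻¹ := by simpa using mul_self_mul_inv c⁻¹
  simp only [IsIdempotentElem, centerProj, smul_mul_assoc, mul_smul_comm,
    vecMulVec_mul_vecMulVec_eq_smul, centerVec_dotProduct_centerVec hi]
  match_scalars
  linear_combination hc ((#N : ℝ) * (#N + 1))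

theorem leafProj_mul_centerProj (hi : i ∉ N) (hN : N.Nonempty) :
    leafProj N * centerProj i N = 0 := by
  have hm : (#N : ℝ) ≠ 0 := by simp [hN.ne_empty]
  simp only [leafProj, centerProj, sub_mul, mul_smul_comm, smul_mul_assoc,
    diagonal_mul_vecMulVec, vecMulVec_mul_vecMulVec_eq_smul, leafInd_mul_centerVec hi,
    leafInd_dotProduct_centerVec hi, neg_vecMulVec]
  match_scalars
  field_simp
  ring

theorem centerProj_mul_leafProj (hi : i ∉ N) (hN : N.Nonempty) :
    centerProj i N * leafProj N = 0 := by
  have hm : (#N : ℝ) ≠ 0 := by simp [hN.ne_empty]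
  simp only [leafProj, centerProj, mul_sub, mul_smul_comm, smul_mul_assoc,
    vecMulVec_mul_diagonal, vecMulVec_mul_vecMulVec_eq_smul, mul_comm (centerVec i N),
    leafInd_mul_centerVec hi, dotProduct_comm (centerVec i N), leafInd_dotProduct_centerVec hi,
    vecMulVec_neg]
  match_scalars
  field_simp
  ring

end StarGraph

open StarGraph Finset

theorem starLap_eq_leafProj_add_smul_centerProj {n : ℕ} {i : Fin n} {N : Finset (Fin n)}
    (hi : i ∉ N) (hN : N.Nonempty) :
    starLap n #N i N = leafProj N + ((#N : ℝ) + 1) • centerProj i N := by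
  have hm : (#N : ℝ) ≠ 0 := by simp [hN.ne_empty]
  ext k l
  simp only [starLap, leafProj, centerProj, centerVec, leafInd, of_apply, Matrix.add_apply,
    Matrix.sub_apply, Matrix.smul_apply, diagonal_apply, vecMulVec_apply, Pi.sub_apply,
    Pi.smul_apply, Pi.single_apply, smul_eq_mul]
  by_cases hk : k = i <;> by_cases hl : l = i <;>
    by_cases hkN : k ∈ N <;> by_cases hlN : l ∈ N <;>
      by_cases hkl : k = l <;>
        simp_all <;> field_simp <;> ring

theorem exp_neg_smul_starLap {n : ℕ} {i : Fin n} {N : Finset (Fin n)} (hi : i ∉ N)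
    (hN : N.Nonempty) (T : ℝ) :
    NormedSpace.exp (-T • starLap n #N i N) = Real.exp (-T) • leafProj N +
      Real.exp (-((#N : ℝ) + 1) * T) • centerProj i N + (1 - leafProj N - centerProj i N) := by
  rw [starLap_eq_leafProj_add_smul_centerProj hi hN, smul_add, smul_smul, mul_comm (-T),
    ← neg_mul_comm, exp_smul_add_smul_of_mul_eq_zero isIdempotentElem_leafProj
      (isIdempotentElem_centerProj hi) (leafProj_mul_centerProj hi hN)
      (centerProj_mul_leafProj hi hN)]

theorem starLap_exp_entries_general (n m : ℕ) (hm1 : 1 ≤ m)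
    (i : Fin n) (N : Finset (Fin n)) (hiN : i ∉ N) (hcard : N.card = m)
    (T : ℝ)
    (E : Matrix (Fin n) (Fin n) ℝ) (hE : E = NormedSpace.exp (-T • starLap n m i N)) :
    (E i i = (1 + m * Real.exp (-((m : ℝ) + 1) * T)) / ((m : ℝ) + 1)) ∧
    (∀ j ∈ N, E i j = (1 - Real.exp (-((m : ℝ) + 1) * T)) / ((m : ℝ) + 1) ∧
      E j i = (1 - Real.exp (-((m : ℝ) + 1) * T)) / ((m : ℝ) + 1)) ∧
    (∀ j ∈ N, E j j = Real.exp (-T) +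
      ((m : ℝ) + Real.exp (-((m : ℝ) + 1) * T) - ((m : ℝ) + 1) * Real.exp (-T)) /
        ((m : ℝ) * ((m : ℝ) + 1))) ∧
    (∀ j ∈ N, ∀ j' ∈ N, j ≠ j' →
      E j j' = ((m : ℝ) + Real.exp (-((m : ℝ) + 1) * T) - ((m : ℝ) + 1) * Real.exp (-T)) /
        ((m : ℝ) * ((m : ℝ) + 1))) ∧
    (∀ p : Fin n, p ≠ i → p ∉ N → E p p = 1) ∧
    (∀ p q : Fin n, p ≠ q → (p ≠ i ∧ p ∉ N) ∨ (q ≠ i ∧ q ∉ N) → E p q = 0) := by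
  subst hcard hE
  have hN : N.Nonempty := card_pos.mp hm1
  have hm : (#N : ℝ) ≠ 0 := by simp [hN.ne_empty]
  have hmem : ∀ j ∈ N, j ≠ i := fun j hj => ne_of_mem_of_not_mem hj hiN
  have hmem' : ∀ j ∈ N, i ≠ j := fun j hj => (hmem j hj).symm
  rw [exp_neg_smul_starLap hiN hN]
  simp only [leafProj, centerProj, centerVec, leafInd, Matrix.add_apply, Matrix.sub_apply,
    Matrix.smul_apply, one_apply, diagonal_apply, vecMulVec_apply, Pi.sub_apply, Pi.smul_apply,
    Pi.single_apply, smul_eq_mul]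
  refine ⟨?_, fun j hj => ⟨?_, ?_⟩, fun j hj => ?_, fun j hj j' hj' hjj' => ?_,
    fun p hpi hpN => ?_, fun p q hpq => Or.rec (fun ⟨hpi, hpN⟩ => ?_) (fun ⟨hqi, hqN⟩ => ?_)⟩
  all_goals simp [*]
  all_goals field_simp
  all_goals ring

/-- Explicit entries of the matrix exponential `exp(-T L_{i,N})` of the
star Laplacian. -/
theorem starLap_exp_entries (n m : ℕ) (hn : 2 ≤ n) (hm1 : 1 ≤ m) (hm2 : m ≤ n - 1)
    (i : Fin n) (N : Finset (Fin n)) (hiN : i ∉ N) (hcard : N.card = m)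
    (T : ℝ) (hT : 0 ≤ T)
    (E : Matrix (Fin n) (Fin n) ℝ) (hE : E = NormedSpace.exp (-T • starLap n m i N)) :
    (E i i = (1 + m * Real.exp (-((m : ℝ) + 1) * T)) / ((m : ℝ) + 1)) ∧
    (∀ j ∈ N, E i j = (1 - Real.exp (-((m : ℝ) + 1) * T)) / ((m : ℝ) + 1) ∧
      E j i = (1 - Real.exp (-((m : ℝ) + 1) * T)) / ((m : ℝ) + 1)) ∧
    (∀ j ∈ N, E j j = Real.exp (-T) +
      ((m : ℝ) + Real.exp (-((m : ℝ) + 1) * T) - ((m : ℝ) + 1) * Real.exp (-T)) /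
        ((m : ℝ) * ((m : ℝ) + 1))) ∧
    (∀ j ∈ N, ∀ j' ∈ N, j ≠ j' →
      E j j' = ((m : ℝ) + Real.exp (-((m : ℝ) + 1) * T) - ((m : ℝ) + 1) * Real.exp (-T)) /
        ((m : ℝ) * ((m : ℝ) + 1))) ∧
    (∀ p : Fin n, p ≠ i → p ∉ N → E p p = 1) ∧
    (∀ p q : Fin n, p ≠ q → (p ≠ i ∧ p ∉ N) ∨ (q ≠ i ∧ q ∉ N) → E p q = 0) :=
  starLap_exp_entries_general n m hm1 i N hiN hcard T E hE
end

section
/- Let n ≥ 2, let L be a random n×n real matrix taking finitely many values, each of which is a graph Laplacian on n nodes, and let T ≥ 0. Then the symmetric matrix E[exp(−2T L)] has the all-ones vector 𝟙 as an eigenvector with eigenvalue 1, this eigenvalue is the largest eigenvalue λ_n(E[exp(−2TL)]), and for every x ∈ ℝⁿ orthogonal to 𝟙 one has E[ ‖exp(−T L) x‖² ] ≤ λ_{n−1}( E[exp(−2T L)] ) · ‖x‖². -/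
/-!
Every `exp(-t L)` with `t ≥ 0` and `L` a graph Laplacian is a symmetric contraction fixing `𝟙`:
Gershgorin's theorem puts the spectrum of `L` in `[0, ∞)`, and `exp(-t L) - 1 = g(L) L` for
`g(x) = (e^{-t x} - 1) / x`. Averaging, `E = E[exp(-2T L)]` is a symmetric matrix with `E 𝟙 = 𝟙`
and `⟨x, E x⟩ ≤ ‖x‖²`, so its top eigenvalue is `1`. Finally
`E[‖exp(-T L) x‖²] = ⟨x, E x⟩`, and on `𝟙^⊥` this quadratic form is bounded by the second
eigenvalue: either the top eigenvalue equals the second one, or it is simple, and then `𝟙` spans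
its eigenspace, so `x ⊥ 𝟙` has no component along it.
-/

open Matrix MeasureTheory ProbabilityTheory

namespace LinearMap.IsSymmetric

variable {𝕜 E : Type*} [RCLike 𝕜] [NormedAddCommGroup E] [InnerProductSpace 𝕜 E]
  [FiniteDimensional 𝕜 E] {T : E →ₗ[𝕜] E} (hT : T.IsSymmetric)

section
variable {n : ℕ} (hn : Module.finrank 𝕜 E = n)

lemma re_inner_apply_eq_sum (x : E) :
    RCLike.re (inner 𝕜 x (T x)) =
      ∑ i, hT.eigenvalues hn i * ‖(hT.eigenvectorBasis hn).repr x i‖ ^ 2 := by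
  rw [← (hT.eigenvectorBasis hn).repr.inner_map_map, PiLp.inner_apply, map_sum]
  refine Finset.sum_congr rfl fun i _ => ?_
  rw [hT.eigenvectorBasis_apply_self_apply, RCLike.inner_apply, mul_assoc, RCLike.mul_conj]
  norm_cast

lemma norm_sq_eq_sum_repr (x : E) :
    ‖x‖ ^ 2 = ∑ i, ‖(hT.eigenvectorBasis hn).repr x i‖ ^ 2 := by
  rw [← (hT.eigenvectorBasis hn).repr.norm_map, EuclideanSpace.norm_sq_eq]

lemma eigenvalues_zero_eq_of_re_inner_le [NeZero n] {μ : ℝ} {v : E} (hv : v ≠ 0)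
    (hTv : T v = (μ : 𝕜) • v) (hle : ∀ x, RCLike.re (inner 𝕜 x (T x)) ≤ μ * ‖x‖ ^ 2) :
    hT.eigenvalues hn 0 = μ := by
  apply le_antisymm
  · have h := hle (hT.eigenvectorBasis hn 0)
    rwa [apply_eigenvectorBasis, inner_smul_right, inner_self_eq_norm_sq_to_K,
      (hT.eigenvectorBasis hn).orthonormal.1, ← RCLike.ofReal_pow, ← RCLike.ofReal_mul,
      RCLike.ofReal_re, one_pow, mul_one, mul_one] at h
  · obtain ⟨i, hi⟩ := hT.exists_eigenvalues_eq hn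
      (Module.End.hasEigenvalue_of_hasEigenvector ⟨Module.End.mem_eigenspace_iff.mpr hTv, hv⟩)
    rw [← RCLike.ofReal_inj.mp hi]
    exact hT.eigenvalues_antitone hn (Fin.zero_le i)

end

section
variable {n : ℕ} (hn : Module.finrank 𝕜 E = n + 2)

lemma repr_eq_zero_of_eigenvalues_one_lt {v : E} (hTv : T v = (hT.eigenvalues hn 0 : 𝕜) • v)
    (hlt : hT.eigenvalues hn 1 < hT.eigenvalues hn 0) {i : Fin (n + 2)} (hi : i ≠ 0) :
    (hT.eigenvectorBasis hn).repr v i = 0 := by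
  have h := hT.eigenvectorBasis_apply_self_apply hn v i
  rw [hTv, map_smul, PiLp.smul_apply, smul_eq_mul] at h
  have hne : (hT.eigenvalues hn i : 𝕜) ≠ hT.eigenvalues hn 0 := by
    exact_mod_cast ((hT.eigenvalues_antitone hn (Fin.one_le_of_ne_zero hi)).trans_lt hlt).ne
  exact (mul_eq_mul_right_iff.mp h.symm).resolve_left hne

lemma repr_zero_eq_zero_of_inner_eq_zero {v x : E} (hv : v ≠ 0)
    (hTv : T v = (hT.eigenvalues hn 0 : 𝕜) • v) (hx : inner 𝕜 v x = 0)
    (hlt : hT.eigenvalues hn 1 < hT.eigenvalues hn 0) :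
    (hT.eigenvectorBasis hn).repr x 0 = 0 := by
  set b := hT.eigenvectorBasis hn
  have hv_off : ∀ j ≠ 0, b.repr v j = 0 := fun j hj =>
    hT.repr_eq_zero_of_eigenvalues_one_lt hn hTv hlt hj
  have hv_zero : b.repr v 0 ≠ 0 := by
    refine fun h0 => hv (b.repr.map_eq_zero_iff.mp (PiLp.ext fun j => ?_))
    rcases eq_or_ne j 0 with rfl | hj
    · exact h0
    · exact hv_off j hj
  rw [← b.repr.inner_map_map, PiLp.inner_apply,
    Fintype.sum_eq_single 0 fun j hj => by simp [hv_off j hj], RCLike.inner_apply] at hx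
  exact (mul_eq_zero.mp hx).resolve_right (by simpa using hv_zero)

lemma re_inner_apply_le_of_inner_eq_zero {v x : E} (hv : v ≠ 0)
    (hTv : T v = (hT.eigenvalues hn 0 : 𝕜) • v) (hx : inner 𝕜 v x = 0) :
    RCLike.re (inner 𝕜 x (T x)) ≤ hT.eigenvalues hn 1 * ‖x‖ ^ 2 := by
  set b := hT.eigenvectorBasis hn
  have hcoord (i : Fin (n + 2)) :
      hT.eigenvalues hn i * ‖b.repr x i‖ ^ 2 ≤ hT.eigenvalues hn 1 * ‖b.repr x i‖ ^ 2 := by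
    rcases eq_or_ne i 0 with rfl | hi
    · rcases (hT.eigenvalues_antitone hn (Fin.zero_le 1)).eq_or_lt with heq | hlt
      · rw [heq]
      · rw [hT.repr_zero_eq_zero_of_inner_eq_zero hn hv hTv hx hlt]
        simp
    · exact mul_le_mul_of_nonneg_right
        (hT.eigenvalues_antitone hn (Fin.one_le_of_ne_zero hi)) (sq_nonneg _)
  rw [hT.re_inner_apply_eq_sum hn, hT.norm_sq_eq_sum_repr hn, Finset.mul_sum]
  exact Finset.sum_le_sum fun i _ => hcoord i

end

end LinearMap.IsSymmetric

lemma sort_map_univ_of_antitone {n : ℕ} {f : Fin n → ℝ} (hf : Antitone f) :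
    (Finset.univ.val.map f).sort (· ≤ ·) = (List.ofFn f).reverse := by
  rw [Fin.univ_val_map, ← Multiset.coe_reverse, Multiset.coe_sort]
  apply List.mergeSort_of_pairwise
  simp only [List.pairwise_reverse, List.pairwise_ofFn, decide_eq_true_eq]
  exact fun i j hij => hf hij.le

lemma eucNorm_sq {n : ℕ} (x : Fin n → ℝ) : eucNorm x ^ 2 = x ⬝ᵥ x := by
  rw [eucNorm, ← real_inner_self_eq_norm_sq, EuclideanSpace.inner_eq_star_dotProduct]
  rfl

lemma Matrix.dotProduct_mulVec_eq_re_inner {n : ℕ} (A : Matrix (Fin n) (Fin n) ℝ)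
    (x : Fin n → ℝ) :
    x ⬝ᵥ (A *ᵥ x) =
      RCLike.re (inner ℝ (WithLp.toLp 2 x) (toEuclideanLin A (WithLp.toLp 2 x))) := by
  rw [EuclideanSpace.inner_toLp_toLp, RCLike.re_to_real, star_trivial, dotProduct_comm]
  rfl

namespace Matrix.IsHermitian

lemma map_eigenvalues_eq {n : ℕ} {A : Matrix (Fin n) (Fin n) ℝ} (hA : A.IsHermitian) :
    Finset.univ.val.map hA.eigenvalues = Finset.univ.val.map
      ((isSymmetric_toEuclideanLin_iff.mpr hA).eigenvalues finrank_euclideanSpace_fin) := by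
  have h := (isSymmetric_toEuclideanLin_iff.mpr hA).roots_charpoly_eq_eigenvalues
    finrank_euclideanSpace_fin
  have hchar : (toEuclideanLin A).charpoly = A.charpoly := by
    rw [toEuclideanLin_eq_toLin_orthonormal, charpoly_toLin]
  rw [hchar, hA.roots_charpoly_eq_eigenvalues] at h
  simpa using h

/-- `sortedEig` counts from the bottom, Mathlib's `eigenvalues` of a symmetric map from the top. -/
lemma sortedEig_sub_one_sub {n : ℕ} {A : Matrix (Fin n) (Fin n) ℝ} (hA : A.IsHermitian)
    (i : Fin n) :
    sortedEig A (n - 1 - i) =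
      (isSymmetric_toEuclideanLin_iff.mpr hA).eigenvalues finrank_euclideanSpace_fin i := by
  rw [sortedEig, dif_pos hA, hA.map_eigenvalues_eq,
    sort_map_univ_of_antitone (LinearMap.IsSymmetric.eigenvalues_antitone _ _),
    List.getD_eq_getElem?_getD, List.getElem?_reverse (by simp; omega)]
  simp [show n - 1 - (n - 1 - i) = i by omega]

lemma sortedEig_sub_one_eq {n : ℕ} [NeZero n] {A : Matrix (Fin n) (Fin n) ℝ}
    (hA : A.IsHermitian) {μ : ℝ} {v : Fin n → ℝ} (hv : v ≠ 0) (hAv : A *ᵥ v = μ • v)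
    (hle : ∀ x, x ⬝ᵥ (A *ᵥ x) ≤ μ * (x ⬝ᵥ x)) :
    sortedEig A (n - 1) = μ := by
  have h := hA.sortedEig_sub_one_sub 0
  rw [Fin.val_zero, Nat.sub_zero] at h
  rw [h]
  refine (isSymmetric_toEuclideanLin_iff.mpr hA).eigenvalues_zero_eq_of_re_inner_le _
    (v := WithLp.toLp 2 v) (by simpa using hv) ?_ fun x => ?_
  · exact congrArg (WithLp.toLp 2) hAv
  · have := hle (WithLp.ofLp x)
    rwa [dotProduct_mulVec_eq_re_inner, ← eucNorm_sq] at this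

lemma dotProduct_mulVec_le_sortedEig {n : ℕ} (hn : 2 ≤ n) {A : Matrix (Fin n) (Fin n) ℝ}
    (hA : A.IsHermitian) {v x : Fin n → ℝ} (hv : v ≠ 0)
    (hAv : A *ᵥ v = sortedEig A (n - 1) • v) (hx : v ⬝ᵥ x = 0) :
    x ⬝ᵥ (A *ᵥ x) ≤ sortedEig A (n - 2) * (x ⬝ᵥ x) := by
  obtain ⟨m, rfl⟩ : ∃ m, n = m + 2 := ⟨n - 2, by omega⟩
  have h0 := hA.sortedEig_sub_one_sub 0
  have h1 := hA.sortedEig_sub_one_sub 1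
  rw [Fin.val_zero, Nat.sub_zero] at h0
  rw [Fin.val_one, show m + 2 - 1 - 1 = m + 2 - 2 by omega] at h1
  rw [h1, dotProduct_mulVec_eq_re_inner, ← eucNorm_sq]
  refine (isSymmetric_toEuclideanLin_iff.mpr hA).re_inner_apply_le_of_inner_eq_zero _
    (v := WithLp.toLp 2 v) (by simpa using hv) ?_ ?_
  · rw [← h0]
    exact congrArg (WithLp.toLp 2) hAv
  · rw [EuclideanSpace.inner_toLp_toLp, star_trivial, dotProduct_comm, hx]

end Matrix.IsHermitian

namespace Matrix

variable {ι : Type*} [Fintype ι] [DecidableEq ι] {A : Matrix ι ι ℝ}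

/-- Uses `f x = ((f x - f 0) / x) * x + f 0`, which holds also at `x = 0` since `0 / 0 = 0`. -/
lemma cfc_mulVec_of_mulVec_eq_zero (hA : IsSelfAdjoint A) (f : ℝ → ℝ) {v : ι → ℝ}
    (hv : A *ᵥ v = 0) : cfc f A *ᵥ v = f 0 • v := by
  have hf : f = fun x => (f x - f 0) / x * x + f 0 := by
    funext x
    rcases eq_or_ne x 0 with rfl | hx
    · simp
    · field_simp
      ring
  have hfin : (spectrum ℝ A).Finite := Matrix.finite_real_spectrum
  rw [hf, cfc_add_const _ _ _ (hfin.continuousOn _) hA,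
    cfc_mul _ _ _ (hfin.continuousOn _) (hfin.continuousOn _), cfc_id' ℝ A hA, add_mulVec,
    ← mulVec_mulVec, hv, mulVec_zero, zero_add, Algebra.algebraMap_eq_smul_one, smul_mulVec,
    one_mulVec]
  simp

open scoped MatrixOrder in
lemma dotProduct_cfc_mulVec_le {f : ℝ → ℝ} (hf : ∀ x ∈ spectrum ℝ A, f x ≤ 1) (x : ι → ℝ) :
    x ⬝ᵥ (cfc f A *ᵥ x) ≤ x ⬝ᵥ x := by
  have h := (Matrix.le_iff.mp (cfc_le_one f A hf)).dotProduct_mulVec_nonneg x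
  rw [sub_mulVec, one_mulVec, dotProduct_sub, star_trivial] at h
  linarith

open scoped Matrix.Norms.L2Operator in
lemma exp_smul_eq_cfc (hA : IsSelfAdjoint A) (t : ℝ) :
    NormedSpace.exp (t • A) = cfc (fun x => Real.exp (t * x)) A := by
  have hcont : ContinuousOn Real.exp ((t • ·) '' spectrum ℝ A) :=
    Real.continuous_exp.continuousOn
  rw [← CFC.real_exp_eq_normedSpace_exp (.smul (IsSelfAdjoint.all t) hA),
    ← cfc_comp_smul t Real.exp A hcont hA]
  simp only [smul_eq_mul]

lemma exp_smul_mul_exp_smul (s t : ℝ) :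
    NormedSpace.exp (s • A) * NormedSpace.exp (t • A) = NormedSpace.exp ((s + t) • A) := by
  rw [← Matrix.exp_add_of_commute _ _ ((Commute.refl A).smul_left s |>.smul_right t), add_smul]

end Matrix

lemma eucNorm_mulVec_sq {n : ℕ} {B : Matrix (Fin n) (Fin n) ℝ} (hB : B.IsSymm)
    (x : Fin n → ℝ) : eucNorm (B *ᵥ x) ^ 2 = x ⬝ᵥ ((B * B) *ᵥ x) := by
  rw [eucNorm_sq, dotProduct_mulVec, ← mulVec_transpose, hB, mulVec_mulVec, dotProduct_comm]

namespace IsGraphLaplacian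

variable {n : ℕ} {L : Matrix (Fin n) (Fin n) ℝ} (hL : IsGraphLaplacian L)
include hL

lemma isSelfAdjoint : IsSelfAdjoint L :=
  isHermitian_iff_isSymm.mpr hL.1

lemma mulVec_one : L *ᵥ 1 = 0 := by
  funext k
  simpa [mulVec, dotProduct] using hL.2.2 k

/-- Gershgorin: an eigenvalue lies within `∑_{l ≠ k} |L k l| = L k k` of some `L k k`. -/
lemma nonneg_of_mem_spectrum {μ : ℝ} (hμ : μ ∈ spectrum ℝ L) : 0 ≤ μ := by
  rw [← AlgEquiv.spectrum_eq Matrix.toLinAlgEquiv',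
    ← Module.End.hasEigenvalue_iff_mem_spectrum] at hμ
  obtain ⟨k, hk⟩ := eigenvalue_mem_ball hμ
  have hradius : ∑ l ∈ Finset.univ.erase k, ‖L k l‖ = L k k := by
    have hrow := hL.2.2 k
    rw [← Finset.add_sum_erase _ _ (Finset.mem_univ k)] at hrow
    rw [Finset.sum_congr rfl fun l hl =>
      Real.norm_of_nonpos (hL.2.1 k l (Finset.ne_of_mem_erase hl).symm), Finset.sum_neg_distrib]
    linarith
  rw [Metric.mem_closedBall, hradius, Real.dist_eq] at hk
  linarith [abs_le.mp hk]

lemma exp_smul_mulVec_one (t : ℝ) : NormedSpace.exp (t • L) *ᵥ 1 = 1 := by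
  rw [exp_smul_eq_cfc hL.isSelfAdjoint,
    cfc_mulVec_of_mulVec_eq_zero hL.isSelfAdjoint _ hL.mulVec_one, mul_zero, Real.exp_zero,
    one_smul]

lemma dotProduct_exp_smul_mulVec_le {t : ℝ} (ht : t ≤ 0) (x : Fin n → ℝ) :
    x ⬝ᵥ (NormedSpace.exp (t • L) *ᵥ x) ≤ x ⬝ᵥ x := by
  rw [exp_smul_eq_cfc hL.isSelfAdjoint]
  exact dotProduct_cfc_mulVec_le (fun μ hμ => Real.exp_le_one_iff.mpr
    (mul_nonpos_of_nonpos_of_nonneg ht (hL.nonneg_of_mem_spectrum hμ))) x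

lemma isSymm_exp_smul (t : ℝ) : (NormedSpace.exp (t • L)).IsSymm :=
  (hL.1.smul t).exp

end IsGraphLaplacian

instance (n : ℕ) : MeasurableSingletonClass (Matrix (Fin n) (Fin n) ℝ) :=
  inferInstanceAs (MeasurableSingletonClass (Fin n → Fin n → ℝ))

section Expectation

variable {Ω : Type*} [MeasurableSpace Ω] {μ : Measure Ω}

lemma integrable_comp_of_finite_range [IsFiniteMeasure μ] {X : Type*} [MeasurableSpace X]
    [MeasurableSingletonClass X] {L : Ω → X} (hmeas : Measurable L) (hfin : (Set.range L).Finite)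
    (g : X → ℝ) : Integrable (fun ω => g (L ω)) μ := by
  have : Finite (Set.range L) := hfin.to_subtype
  have hg : Measurable fun ω => g (L ω) :=
    (measurable_of_finite fun A : Set.range L => g A).comp
      (hmeas.subtype_mk (h := Set.mem_range_self))
  obtain ⟨C, hC⟩ := (hfin.image fun A => ‖g A‖).bddAbove
  exact .of_bound hg.aestronglyMeasurable C (ae_of_all _ fun ω => hC ⟨L ω, ⟨ω, rfl⟩, rfl⟩)

variable {ι : Type*} {M : Ω → Matrix ι ι ℝ}

lemma isSymm_integral (hM : ∀ ω, (M ω).IsSymm) : (of fun p q => ∫ ω, M ω p q ∂μ).IsSymm := by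
  ext p q
  exact integral_congr_ae (ae_of_all _ fun ω => (hM ω).apply p q)

variable [Fintype ι]

section
variable (hM : ∀ p q, Integrable (fun ω => M ω p q) μ)
include hM

lemma integral_mulVec_apply (y : ι → ℝ) (k : ι) :
    ((of fun p q => ∫ ω, M ω p q ∂μ) *ᵥ y) k = ∫ ω, (M ω *ᵥ y) k ∂μ := by
  simp only [mulVec, dotProduct, of_apply]
  rw [integral_finsetSum _ fun l _ => (hM k l).mul_const _]
  simp only [integral_mul_const]

lemma integrable_mulVec_apply (y : ι → ℝ) (k : ι) :
    Integrable (fun ω => (M ω *ᵥ y) k) μ :=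
  integrable_finsetSum _ fun l _ => (hM k l).mul_const _

lemma integrable_dotProduct_mulVec (x y : ι → ℝ) :
    Integrable (fun ω => x ⬝ᵥ (M ω *ᵥ y)) μ :=
  integrable_finsetSum _ fun k _ => (integrable_mulVec_apply hM y k).const_mul _

lemma dotProduct_integral_mulVec (x y : ι → ℝ) :
    x ⬝ᵥ ((of fun p q => ∫ ω, M ω p q ∂μ) *ᵥ y) = ∫ ω, x ⬝ᵥ (M ω *ᵥ y) ∂μ := by
  simp only [dotProduct, integral_mulVec_apply hM]
  rw [integral_finsetSum _ fun k _ => (integrable_mulVec_apply hM y k).const_mul _]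
  simp only [integral_const_mul]

variable [IsProbabilityMeasure μ]

lemma integral_mulVec_eq_self {v : ι → ℝ} (hv : ∀ ω, M ω *ᵥ v = v) :
    (of fun p q => ∫ ω, M ω p q ∂μ) *ᵥ v = v := by
  funext k
  simp [integral_mulVec_apply hM, hv]

lemma dotProduct_integral_mulVec_le (hle : ∀ ω x, x ⬝ᵥ (M ω *ᵥ x) ≤ x ⬝ᵥ x) (x : ι → ℝ) :
    x ⬝ᵥ ((of fun p q => ∫ ω, M ω p q ∂μ) *ᵥ x) ≤ x ⬝ᵥ x := by
  rw [dotProduct_integral_mulVec hM]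
  exact (integral_mono (integrable_dotProduct_mulVec hM x x) (integrable_const _)
    fun ω => hle ω x).trans_eq (by simp)

end

end Expectation

/-- For a random graph Laplacian `L` taking finitely many values and
`T ≥ 0`, the symmetric matrix `E[exp(-2T L)]` has the all-ones vector as eigenvector with
eigenvalue `1`, this is its largest eigenvalue, and
`E[‖exp(-T L) x‖²] ≤ λ_{n-1}(E[exp(-2T L)]) ‖x‖²` for every `x ⊥ 𝟙`. -/
theorem expectation_exp_contraction (n : ℕ) (hn : 2 ≤ n)
    (Ω : Type) [MeasurableSpace Ω] (μ : Measure Ω) [IsProbabilityMeasure μ]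
    (L : Ω → Matrix (Fin n) (Fin n) ℝ) (hmeas : Measurable L)
    (hfin : (Set.range L).Finite) (hlap : ∀ ω, IsGraphLaplacian (L ω))
    (T : ℝ) (hT : 0 ≤ T)
    (E : Matrix (Fin n) (Fin n) ℝ)
    (hE : E = Matrix.of fun p q => ∫ ω, NormedSpace.exp (-(2 * T) • L ω) p q ∂μ) :
    E.IsSymm ∧
    (E *ᵥ (fun _ => (1 : ℝ))) = (fun _ => (1 : ℝ)) ∧
    sortedEig E (n - 1) = 1 ∧
    (∀ x : Fin n → ℝ, (∑ k, x k) = 0 →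
      ∫ ω, eucNorm ((NormedSpace.exp (-T • L ω)) *ᵥ x) ^ 2 ∂μ ≤
        sortedEig E (n - 2) * eucNorm x ^ 2) := by
  have : NeZero n := ⟨by omega⟩
  have hint (p q) : Integrable (fun ω => NormedSpace.exp (-(2 * T) • L ω) p q) μ :=
    integrable_comp_of_finite_range hmeas hfin fun A => NormedSpace.exp (-(2 * T) • A) p q
  have hsymm : E.IsSymm := hE ▸ isSymm_integral fun ω => (hlap ω).isSymm_exp_smul _
  have hone : E *ᵥ 1 = 1 :=
    hE ▸ integral_mulVec_eq_self hint fun ω => (hlap ω).exp_smul_mulVec_one _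
  have hle (x) : x ⬝ᵥ (E *ᵥ x) ≤ 1 * (x ⬝ᵥ x) := by
    rw [one_mul, hE]
    exact dotProduct_integral_mulVec_le hint
      (fun ω => (hlap ω).dotProduct_exp_smul_mulVec_le (by linarith)) x
  have hherm : E.IsHermitian := isHermitian_iff_isSymm.mpr hsymm
  have htop : sortedEig E (n - 1) = 1 :=
    hherm.sortedEig_sub_one_eq (v := 1) one_ne_zero (by rw [hone, one_smul]) hle
  refine ⟨hsymm, hone, htop, fun x hx => ?_⟩
  have hnorm (ω) : eucNorm (NormedSpace.exp (-T • L ω) *ᵥ x) ^ 2 =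
      x ⬝ᵥ (NormedSpace.exp (-(2 * T) • L ω) *ᵥ x) := by
    rw [eucNorm_mulVec_sq ((hlap ω).isSymm_exp_smul _), exp_smul_mul_exp_smul]
    ring_nf
  have hquad : x ⬝ᵥ (E *ᵥ x) = ∫ ω, x ⬝ᵥ (NormedSpace.exp (-(2 * T) • L ω) *ᵥ x) ∂μ :=
    hE ▸ dotProduct_integral_mulVec hint x x
  rw [integral_congr_ae (ae_of_all _ hnorm), ← hquad, eucNorm_sq]
  exact hherm.dotProduct_mulVec_le_sortedEig hn (v := 1) one_ne_zero
    (by rw [hone, htop, one_smul]) (by simpa [one_dotProduct] using hx)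
end

section
/- Let n ≥ 3 and 1 ≤ m ≤ n−1 be integers, let a_1,…,a_n ≥ 0 satisfy Σ_{i=1}^n a_i ≤ 1 with a_i > 0 for at least one i, and let T > 0. Then γ_SP := 1 − Σ_{i=1}^n a_i + λ_{n−1}( Σ_{i=1}^n a_i M_i(T) ) satisfies γ_SP < 1. -/
open Matrix MeasureTheory ProbabilityTheory

/-!
Write `s = ∑ aᵢ` and `A = ∑ aᵢ Mᵢ(T)`. Each `1 - Mᵢ(T)` is the Laplacian of a weighted graph:
a star centred at `i` with positive weight, plus a clique on `V \ {i}` whose weight is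
nonnegative by Bernoulli's inequality. Hence `s • 1 - A = ∑ aᵢ (1 - Mᵢ(T))` is a graph Laplacian
containing the star at some `i` with `aᵢ > 0`, so its quadratic form vanishes only on constant
vectors. An eigenvector of `A` with eigenvalue `≥ s` is therefore constant, and two orthonormal
vectors cannot both be constant: at most one eigenvalue of `A` reaches `s`, so `λ_{n-1}(A) < s`.
-/

theorem Multiset.getD_sort_lt_of_countP_lt {α : Type*} [LinearOrder α] {s : Multiset α}
    {k : ℕ} {c d : α} (h : s.countP (c ≤ ·) < card s - k) : (s.sort (· ≤ ·)).getD k d < c := by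
  set l := s.sort (· ≤ ·)
  have hk : k < l.length := by rw [Multiset.length_sort]; omega
  rw [List.getD_eq_getElem _ _ hk]
  by_contra! hc
  have hdrop : ∀ y ∈ l.drop k, c ≤ y := by
    rw [List.drop_eq_getElem_cons hk]
    have hsorted := (Multiset.pairwise_sort s (· ≤ ·)).sublist (List.drop_sublist k l)
    rw [List.drop_eq_getElem_cons hk, List.pairwise_cons] at hsorted
    rintro y (_ | ⟨_, hy⟩)
    exacts [hc, hc.trans (hsorted.1 y hy)]
  have hcount : (l.drop k).countP (c ≤ ·) = card s - k := by
    rw [List.countP_eq_length.mpr (by simpa using hdrop), List.length_drop, Multiset.length_sort]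
  have hl : s.countP (c ≤ ·) = l.countP (c ≤ ·) := by
    conv_lhs => rw [← Multiset.sort_eq s (· ≤ ·)]
    rw [Multiset.coe_countP]
  have := (List.drop_sublist k l).countP_le (p := fun y => decide (c ≤ y))
  omega

theorem Orthonormal.eq_of_forall_apply_eq {ι κ : Type*} [Fintype ι]
    {v : κ → EuclideanSpace ℝ ι} (hv : Orthonormal ℝ v) {j₁ j₂ : κ}
    (h₁ : ∀ k l, v j₁ k = v j₁ l) (h₂ : ∀ k l, v j₂ k = v j₂ l) : j₁ = j₂ := by
  by_contra hne
  obtain ⟨k₀, hk₀⟩ : ∃ k, v j₁ k ≠ 0 := by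
    by_contra! h
    exact hv.ne_zero j₁ (PiLp.ext h)
  have hprop : v j₂ = (v j₂ k₀ / v j₁ k₀) • v j₁ := by
    ext k
    rw [PiLp.smul_apply, smul_eq_mul, h₁ k k₀, h₂ k k₀, div_mul_cancel₀ _ hk₀]
  have hzero : v j₂ k₀ / v j₁ k₀ = 0 := by
    have : inner ℝ (v j₁) (v j₂) = 0 := hv.2 hne
    rwa [hprop, inner_smul_right, real_inner_self_eq_norm_sq, hv.1 j₁, one_pow, mul_one] at this
  refine hv.ne_zero j₂ (PiLp.ext fun k => ?_)
  rw [h₂ k k₀]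
  simpa [hk₀] using hzero

namespace Matrix.IsHermitian

variable {ι : Type*} [Fintype ι] [DecidableEq ι] {A : Matrix ι ι ℝ} (hA : A.IsHermitian)

theorem dotProduct_smul_one_sub_mulVec_eigenvectorBasis (c : ℝ) (j : ι) :
    ⇑(hA.eigenvectorBasis j) ⬝ᵥ ((c • 1 - A) *ᵥ ⇑(hA.eigenvectorBasis j)) =
      c - hA.eigenvalues j := by
  have hunit : ⇑(hA.eigenvectorBasis j) ⬝ᵥ ⇑(hA.eigenvectorBasis j) = 1 := by
    have := real_inner_self_eq_norm_sq (hA.eigenvectorBasis j)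
    rwa [hA.eigenvectorBasis.orthonormal.1 j, EuclideanSpace.inner_eq_star_dotProduct,
      star_trivial, one_pow] at this
  have heig := hA.eigenvalues_eq j
  rw [star_trivial, RCLike.re_to_real] at heig
  rw [sub_mulVec, smul_mulVec, one_mulVec, dotProduct_sub, dotProduct_smul, hunit, ← heig,
    smul_eq_mul, mul_one]

theorem card_filter_le_eigenvalues_le_one {c : ℝ}
    (h : ∀ x : ι → ℝ, x ⬝ᵥ ((c • 1 - A) *ᵥ x) ≤ 0 → ∀ k l, x k = x l) :
    (Finset.univ.filter (c ≤ hA.eigenvalues ·)).card ≤ 1 := by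
  refine Finset.card_le_one.mpr fun j₁ hj₁ j₂ hj₂ => ?_
  rw [Finset.mem_filter] at hj₁ hj₂
  refine hA.eigenvectorBasis.orthonormal.eq_of_forall_apply_eq (h _ ?_) (h _ ?_)
  · rw [dotProduct_smul_one_sub_mulVec_eigenvectorBasis]; linarith [hj₁.2]
  · rw [dotProduct_smul_one_sub_mulVec_eigenvectorBasis]; linarith [hj₂.2]

end Matrix.IsHermitian

theorem sortedEig_sub_two_lt {n : ℕ} {A : Matrix (Fin n) (Fin n) ℝ} (hA : A.IsHermitian)
    (hn : 2 ≤ n) {c : ℝ} (h : ∀ x : Fin n → ℝ, x ⬝ᵥ ((c • 1 - A) *ᵥ x) ≤ 0 → ∀ k l, x k = x l) :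
    sortedEig A (n - 2) < c := by
  rw [sortedEig, dif_pos hA]
  apply Multiset.getD_sort_lt_of_countP_lt
  have := hA.card_filter_le_eigenvalues_le_one h
  rw [Multiset.countP_map, Multiset.card_map, ← Finset.filter_val]
  simp only [Finset.card_val, Finset.card_univ, Fintype.card_fin]
  omega

namespace IsGraphLaplacian

variable {n : ℕ} {L L' : Matrix (Fin n) (Fin n) ℝ}

theorem add (hL : IsGraphLaplacian L) (hL' : IsGraphLaplacian L') :
    IsGraphLaplacian (L + L') :=
  ⟨hL.1.add hL'.1, fun k l hkl => add_nonpos (hL.2.1 k l hkl) (hL'.2.1 k l hkl),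
    fun k => by simp only [Matrix.add_apply, Finset.sum_add_distrib, hL.2.2, hL'.2.2, add_zero]⟩

theorem smul (hL : IsGraphLaplacian L) {c : ℝ} (hc : 0 ≤ c) : IsGraphLaplacian (c • L) :=
  ⟨hL.1.smul c, fun k l hkl => mul_nonpos_of_nonneg_of_nonpos hc (hL.2.1 k l hkl),
    fun k => by simp only [Matrix.smul_apply, smul_eq_mul, ← Finset.mul_sum, hL.2.2, mul_zero]⟩

theorem sum_smul {ι : Type*} (s : Finset ι) {a : ι → ℝ} (ha : ∀ i, 0 ≤ a i)
    {L : ι → Matrix (Fin n) (Fin n) ℝ} (hL : ∀ i, IsGraphLaplacian (L i)) :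
    IsGraphLaplacian (∑ i ∈ s, a i • L i) :=
  Finset.sum_induction _ IsGraphLaplacian (fun _ _ => add)
    ⟨Matrix.isSymm_zero, fun _ _ _ => le_rfl, fun _ => by simp⟩
    fun i _ => (hL i).smul (ha i)

theorem sum_smul_apply_le {ι : Type*} [DecidableEq ι] {s : Finset ι} {a : ι → ℝ}
    (ha : ∀ i, 0 ≤ a i) {L : ι → Matrix (Fin n) (Fin n) ℝ} (hL : ∀ i, IsGraphLaplacian (L i))
    {j : ι} (hj : j ∈ s) {k l : Fin n} (hkl : k ≠ l) :
    (∑ i ∈ s, a i • L i) k l ≤ a j * L j k l := by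
  rw [Matrix.sum_apply, ← Finset.add_sum_erase _ _ hj]
  refine add_le_of_nonpos_right (Finset.sum_nonpos fun i _ => ?_)
  exact mul_nonpos_of_nonneg_of_nonpos (ha i) ((hL i).2.1 k l hkl)

theorem dotProduct_mulVec_eq (hL : IsGraphLaplacian L) (x : Fin n → ℝ) :
    x ⬝ᵥ (L *ᵥ x) = (∑ k, ∑ l, -L k l * (x k - x l) ^ 2) / 2 := by
  have hcol : ∀ l, ∑ k, L k l = 0 := fun l => by simpa only [hL.1.apply] using hL.2.2 l
  have hexpand : ∀ k l, -L k l * (x k - x l) ^ 2 =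
      2 * (x k * (L k l * x l)) - L k l * x k ^ 2 - L k l * x l ^ 2 := fun k l => by ring
  simp only [hexpand, Finset.sum_sub_distrib, ← Finset.mul_sum]
  rw [Finset.sum_comm (f := fun k l => L k l * x l ^ 2)]
  simp only [← Finset.sum_mul, hL.2.2, hcol, zero_mul, Finset.sum_const_zero, sub_zero]
  simp only [dotProduct, mulVec]
  ring

theorem neg_mul_sq_sub_nonneg (hL : IsGraphLaplacian L) (x : Fin n → ℝ) (k l : Fin n) :
    0 ≤ -L k l * (x k - x l) ^ 2 := by
  rcases eq_or_ne k l with rfl | hkl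
  · simp
  · exact mul_nonneg (neg_nonneg.mpr (hL.2.1 k l hkl)) (sq_nonneg _)

theorem eq_of_dotProduct_mulVec_nonpos (hL : IsGraphLaplacian L) {x : Fin n → ℝ}
    (hx : x ⬝ᵥ (L *ᵥ x) ≤ 0) {k l : Fin n} (hkl : L k l ≠ 0) : x k = x l := by
  have hrow : ∀ k, 0 ≤ ∑ l, -L k l * (x k - x l) ^ 2 :=
    fun k => Finset.sum_nonneg fun l _ => hL.neg_mul_sq_sub_nonneg x k l
  have hsum : ∑ k, ∑ l, -L k l * (x k - x l) ^ 2 = 0 := by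
    rw [hL.dotProduct_mulVec_eq] at hx
    exact le_antisymm (by linarith) (Finset.sum_nonneg fun k _ => hrow k)
  have hk := (Finset.sum_eq_zero_iff_of_nonneg fun k _ => hrow k).mp hsum k (Finset.mem_univ k)
  have hterm := (Finset.sum_eq_zero_iff_of_nonneg fun l _ => hL.neg_mul_sq_sub_nonneg x k l).mp hk
    l (Finset.mem_univ l)
  rw [mul_eq_zero, neg_eq_zero, pow_eq_zero_iff two_ne_zero, sub_eq_zero] at hterm
  exact hterm.resolve_left hkl

theorem forall_eq_of_dotProduct_mulVec_nonpos (hL : IsGraphLaplacian L) (i : Fin n)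
    (hi : ∀ k, k ≠ i → L i k ≠ 0) {x : Fin n → ℝ} (hx : x ⬝ᵥ (L *ᵥ x) ≤ 0) (k l : Fin n) :
    x k = x l := by
  have hcenter : ∀ k, x i = x k := fun k => by
    rcases eq_or_ne k i with rfl | hk
    exacts [rfl, hL.eq_of_dotProduct_mulVec_nonpos hx (hi k hk)]
  rw [← hcenter k, hcenter l]

end IsGraphLaplacian

section Mmat

open Real

theorem natCast_add_one_mul_exp_neg_le (m : ℕ) (T : ℝ) :
    (m + 1) * exp (-T) ≤ m + exp (-(m + 1) * T) := by
  have hbernoulli := one_add_mul_le_pow (a := exp (-T) - 1) (by linarith [exp_pos (-T)]) (m + 1)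
  have hpow : exp (-(m + 1) * T) = exp (-T) ^ (m + 1) := by
    rw [← exp_nat_mul]; push_cast; ring_nf
  rw [hpow]
  rw [add_sub_cancel] at hbernoulli
  push_cast at hbernoulli
  linarith

noncomputable def starWeight (n m : ℕ) (T : ℝ) : ℝ :=
  m * (1 - exp (-((m : ℝ) + 1) * T)) / (((m : ℝ) + 1) * ((n : ℝ) - 1))

noncomputable def cliqueWeight (n m : ℕ) (T : ℝ) : ℝ :=
  ((m : ℝ) - 1) * ((m : ℝ) + exp (-((m : ℝ) + 1) * T) - ((m : ℝ) + 1) * exp (-T)) /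
    (((m : ℝ) + 1) * ((n : ℝ) - 1) * ((n : ℝ) - 2))

variable {n m : ℕ} {T : ℝ}

theorem starWeight_pos (hn : 2 ≤ n) (hm : 1 ≤ m) (hT : 0 < T) : 0 < starWeight n m T := by
  have hexp : exp (-((m : ℝ) + 1) * T) < 1 := exp_lt_one_iff.mpr (by nlinarith)
  have hn' : (2 : ℝ) ≤ n := by exact_mod_cast hn
  have hm' : (1 : ℝ) ≤ m := by exact_mod_cast hm
  unfold starWeight
  apply div_pos <;> nlinarith

theorem cliqueWeight_nonneg (hn : 3 ≤ n) (hm : 1 ≤ m) : 0 ≤ cliqueWeight n m T := by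
  have hn' : (3 : ℝ) ≤ n := by exact_mod_cast hn
  have hm' : (1 : ℝ) ≤ m := by exact_mod_cast hm
  have := natCast_add_one_mul_exp_neg_le m T
  unfold cliqueWeight
  exact div_nonneg (mul_nonneg (by linarith) (by linarith))
    (mul_pos (mul_pos (by positivity) (by linarith)) (by linarith)).le

theorem Mmat_isSymm (i : Fin n) : (Mmat n m i T).IsSymm := by
  ext k l
  simp only [Matrix.transpose_apply, Mmat, Matrix.of_apply]
  by_cases hk : k = i <;> by_cases hl : l = i <;> by_cases hkl : k = l <;>
    simp_all [eq_comm, or_comm]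

theorem Mmat_apply_center_of_ne {i k : Fin n} (hk : k ≠ i) :
    Mmat n m i T i k = starWeight n m T := by
  simp [Mmat, starWeight, hk, Ne.symm hk]

theorem Mmat_apply_of_ne_center {i k l : Fin n} (hk : k ≠ i) (hl : l ≠ i) (hkl : k ≠ l) :
    Mmat n m i T k l = cliqueWeight n m T := by
  simp [Mmat, cliqueWeight, hk, hl, hkl]

theorem sum_Mmat_apply (hn : 3 ≤ n) (i k : Fin n) : ∑ l, Mmat n m i T k l = 1 := by
  have hn' : (3 : ℝ) ≤ n := by exact_mod_cast hn
  have hm : (m : ℝ) + 1 ≠ 0 := by positivity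
  have hn1 : (n : ℝ) - 1 ≠ 0 := by linarith
  have hn2 : (n : ℝ) - 2 ≠ 0 := by linarith
  rcases eq_or_ne k i with rfl | hk
  · rw [← Finset.add_sum_erase _ _ (Finset.mem_univ k),
      Finset.sum_congr rfl fun l hl => Mmat_apply_center_of_ne (Finset.ne_of_mem_erase hl),
      Finset.sum_const, Finset.card_erase_of_mem (Finset.mem_univ k), Finset.card_univ,
      Fintype.card_fin, nsmul_eq_mul, Nat.cast_sub (by omega)]
    simp only [Mmat, Matrix.of_apply, and_self, if_true, starWeight, Nat.cast_one]
    field_simp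
    ring
  · have hi : i ∈ Finset.univ.erase k := Finset.mem_erase.mpr ⟨hk.symm, Finset.mem_univ i⟩
    rw [← Finset.add_sum_erase _ _ (Finset.mem_univ k), ← Finset.add_sum_erase _ _ hi,
      Finset.sum_congr rfl fun l hl => Mmat_apply_of_ne_center hk (Finset.ne_of_mem_erase hl)
        (Finset.ne_of_mem_erase (Finset.mem_of_mem_erase hl)).symm,
      Finset.sum_const, Finset.card_erase_of_mem hi,
      Finset.card_erase_of_mem (Finset.mem_univ k), Finset.card_univ, Fintype.card_fin,
      show n - 1 - 1 = n - 2 by omega, nsmul_eq_mul, Nat.cast_sub (by omega),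
      (Mmat_isSymm i).apply i k, Mmat_apply_center_of_ne hk]
    simp only [Mmat, Matrix.of_apply, hk, false_and, if_false, if_true, starWeight, cliqueWeight]
    push_cast
    field_simp
    ring

theorem Mmat_nonneg_of_ne (hn : 3 ≤ n) (hm : 1 ≤ m) (hT : 0 < T) {i k l : Fin n} (hkl : k ≠ l) :
    0 ≤ Mmat n m i T k l := by
  have hstar := (starWeight_pos (n := n) (by omega) hm hT).le
  rcases eq_or_ne k i with rfl | hk
  · rwa [Mmat_apply_center_of_ne hkl.symm]
  rcases eq_or_ne l i with rfl | hl
  · rwa [(Mmat_isSymm l).apply, Mmat_apply_center_of_ne hk]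
  rw [Mmat_apply_of_ne_center hk hl hkl]
  exact cliqueWeight_nonneg hn hm

theorem isGraphLaplacian_one_sub_Mmat (hn : 3 ≤ n) (hm : 1 ≤ m) (hT : 0 < T) (i : Fin n) :
    IsGraphLaplacian (1 - Mmat n m i T) := by
  refine ⟨Matrix.isSymm_one.sub (Mmat_isSymm i), fun k l hkl => ?_, fun k => ?_⟩
  · rw [Matrix.sub_apply, Matrix.one_apply_ne hkl, zero_sub, neg_nonpos]
    exact Mmat_nonneg_of_ne hn hm hT hkl
  · simp [Finset.sum_sub_distrib, sum_Mmat_apply hn, Matrix.one_apply]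

theorem one_sub_Mmat_apply_center_neg (hn : 3 ≤ n) (hm : 1 ≤ m) (hT : 0 < T) {i k : Fin n}
    (hk : k ≠ i) : (1 - Mmat n m i T) i k < 0 := by
  rw [Matrix.sub_apply, Matrix.one_apply_ne hk.symm, zero_sub, neg_neg_iff_pos,
    Mmat_apply_center_of_ne hk]
  exact starWeight_pos (by omega) hm hT

end Mmat

theorem gammaSP_lt_one_general (n m : ℕ) (hn : 3 ≤ n) (hm1 : 1 ≤ m)
    (a : Fin n → ℝ) (ha : ∀ i, 0 ≤ a i) (hpos : ∃ i, 0 < a i)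
    (T : ℝ) (hT : 0 < T) :
    1 - ∑ i, a i + sortedEig (∑ i, a i • Mmat n m i T) (n - 2) < 1 := by
  obtain ⟨i₀, hi₀⟩ := hpos
  set L := ∑ i, a i • (1 - Mmat n m i T)
  have hL : IsGraphLaplacian L :=
    IsGraphLaplacian.sum_smul _ ha (isGraphLaplacian_one_sub_Mmat hn hm1 hT)
  have hstar : ∀ k, k ≠ i₀ → L i₀ k ≠ 0 := fun k hk =>
    ((IsGraphLaplacian.sum_smul_apply_le ha (isGraphLaplacian_one_sub_Mmat hn hm1 hT)
      (Finset.mem_univ i₀) hk.symm).trans_lt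
      (mul_neg_of_pos_of_neg hi₀ (one_sub_Mmat_apply_center_neg hn hm1 hT hk))).ne
  have hsub : (∑ i, a i) • 1 - ∑ i, a i • Mmat n m i T = L := by
    simp only [L, smul_sub, Finset.sum_sub_distrib, Finset.sum_smul]
  have hA : (∑ i, a i • Mmat n m i T).IsHermitian := by
    rw [Matrix.isHermitian_iff_isSymm, ← sub_sub_cancel ((∑ i, a i) • 1) (∑ i, a i • _), hsub]
    exact (Matrix.isSymm_one.smul _).sub hL.1
  suffices sortedEig (∑ i, a i • Mmat n m i T) (n - 2) < ∑ i, a i by linarith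
  exact sortedEig_sub_two_lt hA (by omega) fun x hx =>
    hL.forall_eq_of_dotProduct_mulVec_nonpos i₀ hstar (hsub ▸ hx)

/-- `γ_SP = 1 - ∑ᵢ aᵢ + λ_{n-1}(∑ᵢ aᵢ Mᵢ(T)) < 1` whenever the `aᵢ` are
nonnegative, sum to at most `1`, and at least one of them is positive. -/
theorem gammaSP_lt_one (n m : ℕ) (hn : 3 ≤ n) (hm1 : 1 ≤ m) (hm2 : m ≤ n - 1)
    (a : Fin n → ℝ) (ha : ∀ i, 0 ≤ a i) (hsum : ∑ i, a i ≤ 1) (hpos : ∃ i, 0 < a i)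
    (T : ℝ) (hT : 0 < T) :
    1 - ∑ i, a i + sortedEig (∑ i, a i • Mmat n m i T) (n - 2) < 1 :=
  gammaSP_lt_one_general n m hn hm1 a ha hpos T hT
end
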